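/- arXiv:2604.24460 — 3 statements merged into one kernel-verified Lean document; each statement's English description precedes it below -/
import Mathlib

section
/- Let ρ be a Bell-diagonal qutrit-qutrit state, i.e. ρ ∈ M_3, whose partial transpose ρ^Γ is not positive semidefinite, and let λ_min(ρ^Γ) < 0 denote the smallest eigenvalue of the Hermitian matrix ρ^Γ. Then there exists a normalized vector |φ⟩ ∈ ℂ³ ⊗ ℂ³ of Schmidt rank 2 such that ρ^Γ|φ⟩ = λ_min(ρ^Γ)|φ⟩; in particular ⟨φ|ρ^Γ|φ⟩ = λ_min(ρ^Γ) < 0. -/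
/-!
The partial transpose of a Bell-diagonal state has two symmetries: it only couples basis vectors
`|i,j⟩` with the same `i + j`, and it commutes with the diagonal shift `|i,j⟩ ↦ |i+1,j+1⟩`.
Hence if `u` is an eigenvector for `λ_min`, so are its component `w` on one antidiagonal
`i + j = s` and the difference `ψ = w - w(· + (1,1))`. For `d = 3` the coefficient matrix of `ψ`
is supported on the two antidiagonals `s` and `s + 1`; it has an invertible diagonal `2 × 2`
submatrix and a kernel vector, so it has rank 2, and the singular value decomposition of a rank-2
matrix is a two-term Schmidt decomposition.
-/

open Matrix BigOperators Complex Kronecker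
open scoped ComplexOrder

/-- `ω = exp(2πi/d)`. -/
noncomputable def omg (d : ℕ) : ℂ := Complex.exp (2 * Real.pi * Complex.I / (d : ℂ))

/-- `ω^x` for `x : ZMod d`. -/
noncomputable def wpow (d : ℕ) [NeZero d] (x : ZMod d) : ℂ := omg d ^ x.val

/-- Weyl-Heisenberg operator `W_{k,l} = Σ_j ω^{jk} |j⟩⟨j+l|`. -/
noncomputable def Weyl (d : ℕ) [NeZero d] (k l : ZMod d) : Matrix (ZMod d) (ZMod d) ℂ :=
  Matrix.of fun i j => if j = i + l then wpow d (i * k) else 0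

/-- Bell basis vector `|Ω_{k,l}⟩ = (W_{k,l} ⊗ 1)|Ω_{0,0}⟩`, whose `(i,j)` entry is
`(1/√d) (W_{k,l})_{i,j}`. -/
noncomputable def OmegaVec (d : ℕ) [NeZero d] (k l : ZMod d) : ZMod d × ZMod d → ℂ :=
  fun p => ((1 / Real.sqrt d : ℝ) : ℂ) * Weyl d k l p.1 p.2

/-- Bell projector `P_{k,l} = |Ω_{k,l}⟩⟨Ω_{k,l}|`. -/
noncomputable def BellProj (d : ℕ) [NeZero d] (k l : ZMod d) :
    Matrix (ZMod d × ZMod d) (ZMod d × ZMod d) ℂ :=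
  Matrix.of fun p q => OmegaVec d k l p * (starRingEnd ℂ) (OmegaVec d k l q)

/-- Partial transpose on the second tensor factor:
`(ρ^Γ)_{(i,j),(k,l)} = ρ_{(i,l),(k,j)}`. -/
def PT {d : ℕ} (ρ : Matrix (ZMod d × ZMod d) (ZMod d × ZMod d) ℂ) :
    Matrix (ZMod d × ZMod d) (ZMod d × ZMod d) ℂ :=
  Matrix.of fun p q => ρ (p.1, q.2) (q.1, p.2)

/-- A vector in `ℂ^d ⊗ ℂ^d` has Schmidt rank 2:
`φ = μ₀ a₀ ⊗ b₀ + μ₁ a₁ ⊗ b₁` with `μ₀ ≥ μ₁ > 0` and orthonormal pairs. -/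
def SchmidtRank2 {d : ℕ} [NeZero d] (φ : ZMod d × ZMod d → ℂ) : Prop :=
  ∃ (μ₀ μ₁ : ℝ) (a b : Fin 2 → ZMod d → ℂ),
    μ₁ ≤ μ₀ ∧ 0 < μ₁ ∧
    (∀ i j, star (a i) ⬝ᵥ a j = if i = j then 1 else 0) ∧
    (∀ i j, star (b i) ⬝ᵥ b j = if i = j then 1 else 0) ∧
    φ = fun p => (μ₀ : ℂ) * a 0 p.1 * b 0 p.2 + (μ₁ : ℂ) * a 1 p.1 * b 1 p.2

noncomputable def bellDiagonal (d : ℕ) [NeZero d] (c : ZMod d → ZMod d → ℂ) :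
    Matrix (ZMod d × ZMod d) (ZMod d × ZMod d) ℂ :=
  ∑ k, ∑ l, c k l • BellProj d k l

lemma star_dotProduct_self_eq_norm_sq {n : Type*} [Fintype n] (x : n → ℂ) :
    star x ⬝ᵥ x = (‖WithLp.toLp 2 x‖ : ℂ) ^ 2 := by
  have := inner_self_eq_norm_sq_to_K (𝕜 := ℂ) (WithLp.toLp 2 x)
  rwa [EuclideanSpace.inner_eq_star_dotProduct, dotProduct_comm] at this

lemma norm_toLp_pos {n : Type*} [Fintype n] {x : n → ℂ} (hx : x ≠ 0) :
    0 < ‖WithLp.toLp 2 x‖ := by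
  simpa using hx

lemma exists_real_smul_normalized {n : Type*} [Fintype n] {ψ : n → ℂ} (hψ : ψ ≠ 0) :
    ∃ t : ℝ, 0 < t ∧ star ((t : ℂ) • ψ) ⬝ᵥ ((t : ℂ) • ψ) = 1 := by
  refine ⟨‖WithLp.toLp 2 ψ‖⁻¹, inv_pos.mpr (norm_toLp_pos hψ), ?_⟩
  have := (norm_toLp_pos hψ).ne'
  simp [star_smul, star_dotProduct_self_eq_norm_sq]
  field_simp

lemma rank_lt_card_of_mulVec_eq_zero {m n K : Type*} [Fintype n] [Field K] {M : Matrix m n K}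
    {w : n → K} (hw : w ≠ 0) (hMw : M *ᵥ w = 0) : M.rank < Fintype.card n := by
  have hker : 0 < Module.finrank K (LinearMap.ker M.mulVecLin) :=
    Module.finrank_pos_iff_exists_ne_zero.mpr ⟨⟨w, hMw⟩, fun h => hw (congrArg Subtype.val h)⟩
  have := LinearMap.finrank_range_add_finrank_ker M.mulVecLin
  rw [Module.finrank_fintype_fun_eq_card] at this
  rw [Matrix.rank]
  omega

lemma mulVec_indicator_fiber {ι β R : Type*} [Fintype ι] [NonUnitalNonAssocSemiring R]
    {A : Matrix ι ι R} {f : ι → β} (hA : ∀ p q, f p ≠ f q → A p q = 0) (u : ι → R) (b : β) :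
    A *ᵥ {p | f p = b}.indicator u = {p | f p = b}.indicator (A *ᵥ u) := by
  classical
  funext p
  simp only [mulVec, dotProduct, Set.indicator_apply, Set.mem_ofPred_eq, mul_ite, mul_zero]
  split_ifs with hp
  · refine Finset.sum_congr rfl fun q _ => ?_
    split_ifs with hq
    · rfl
    · rw [hA p q (by rwa [hp, ne_comm]), zero_mul]
  · exact Finset.sum_eq_zero fun q _ => by
      split_ifs with hq
      · rw [hA p q (by rwa [hq]), zero_mul]
      · rfl

lemma mulVec_comp_add_right {G R : Type*} [AddGroup G] [Fintype G] [NonUnitalNonAssocSemiring R]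
    {A : Matrix G G R} {t : G} (hA : ∀ p q, A (p + t) (q + t) = A p q) (u : G → R) :
    A *ᵥ (u ∘ (· + t)) = (A *ᵥ u) ∘ (· + t) := by
  funext p
  simp only [mulVec, dotProduct, Function.comp_apply, ← hA p]
  exact Equiv.sum_comp (Equiv.addRight t) fun q => A (p + t) q * u q

section

variable {d : ℕ} [NeZero d]

lemma isPrimitiveRoot_omg : IsPrimitiveRoot (omg d) d :=
  Complex.isPrimitiveRoot_exp d (NeZero.ne d)

lemma wpow_add (x y : ZMod d) : wpow d (x + y) = wpow d x * wpow d y := by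
  rw [wpow, wpow, wpow, ← pow_add, ZMod.val_add]
  conv_rhs => rw [← pow_mod_orderOf, ← (isPrimitiveRoot_omg (d := d)).eq_orderOf]

lemma norm_wpow (x : ZMod d) : ‖wpow d x‖ = 1 := by
  rw [wpow, norm_pow, (isPrimitiveRoot_omg (d := d)).norm'_eq_one (NeZero.ne d), one_pow]

lemma Weyl_add_one_add_one (k l i j : ZMod d) :
    Weyl d k l (i + 1) (j + 1) = wpow d k * Weyl d k l i j := by
  have hshift : j + 1 = i + 1 + l ↔ j = i + l := by
    rw [add_right_comm, add_left_inj]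
  simp only [Weyl, of_apply, hshift]
  split_ifs
  · rw [add_one_mul, wpow_add, mul_comm]
  · rw [mul_zero]

lemma BellProj_add_one_add_one (k l : ZMod d) (p q : ZMod d × ZMod d) :
    BellProj d k l (p + (1, 1)) (q + (1, 1)) = BellProj d k l p q := by
  have hw : wpow d k * starRingEnd ℂ (wpow d k) = 1 := by
    rw [Complex.mul_conj, Complex.normSq_eq_norm_sq, norm_wpow, one_pow, Complex.ofReal_one]
  simp only [BellProj, OmegaVec, of_apply, Prod.fst_add, Prod.snd_add, Weyl_add_one_add_one,
    map_mul]
  linear_combination (((1 / Real.sqrt d : ℝ) : ℂ) * Weyl d k l p.1 p.2 *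
    starRingEnd ℂ ((1 / Real.sqrt d : ℝ) : ℂ) * starRingEnd ℂ (Weyl d k l q.1 q.2)) * hw

lemma BellProj_apply_eq_zero_left {k l : ZMod d} {p : ZMod d × ZMod d}
    (hp : p.2 ≠ p.1 + l) (q : ZMod d × ZMod d) : BellProj d k l p q = 0 := by
  simp [BellProj, OmegaVec, Weyl, hp]

lemma BellProj_apply_eq_zero_right {k l : ZMod d} {q : ZMod d × ZMod d}
    (hq : q.2 ≠ q.1 + l) (p : ZMod d × ZMod d) : BellProj d k l p q = 0 := by
  simp [BellProj, OmegaVec, Weyl, hq]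

lemma PT_BellProj_apply_eq_zero (k l : ZMod d) {p q : ZMod d × ZMod d}
    (hpq : p.1 + p.2 ≠ q.1 + q.2) : PT (BellProj d k l) p q = 0 := by
  change BellProj d k l (p.1, q.2) (q.1, p.2) = 0
  by_cases h : q.2 = p.1 + l
  · refine BellProj_apply_eq_zero_right (fun h' => hpq ?_) _
    simp only at h h'
    rw [h', h]
    ring
  · exact BellProj_apply_eq_zero_left h _

lemma PT_BellProj_add_one_add_one (k l : ZMod d) (p q : ZMod d × ZMod d) :
    PT (BellProj d k l) (p + (1, 1)) (q + (1, 1)) = PT (BellProj d k l) p q :=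
  BellProj_add_one_add_one k l (p.1, q.2) (q.1, p.2)

lemma PT_bellDiagonal_apply (c : ZMod d → ZMod d → ℂ)
    (p q : ZMod d × ZMod d) :
    PT (bellDiagonal d c) p q = ∑ k, ∑ l, c k l * PT (BellProj d k l) p q := by
  simp [bellDiagonal, PT, Matrix.sum_apply]

lemma PT_bellDiagonal_apply_eq_zero (c : ZMod d → ZMod d → ℂ)
    {p q : ZMod d × ZMod d} (hpq : p.1 + p.2 ≠ q.1 + q.2) : PT (bellDiagonal d c) p q = 0 := by
  simp [PT_bellDiagonal_apply, PT_BellProj_apply_eq_zero _ _ hpq]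

lemma PT_bellDiagonal_add_one_add_one (c : ZMod d → ZMod d → ℂ)
    (p q : ZMod d × ZMod d) :
    PT (bellDiagonal d c) (p + (1, 1)) (q + (1, 1)) = PT (bellDiagonal d c) p q := by
  simp only [PT_bellDiagonal_apply, PT_BellProj_add_one_add_one]

lemma SchmidtRank2.real_smul {φ : ZMod d × ZMod d → ℂ} (hφ : SchmidtRank2 φ)
    {t : ℝ} (ht : 0 < t) : SchmidtRank2 ((t : ℂ) • φ) := by
  obtain ⟨μ₀, μ₁, a, b, hμ, hμ₁, ha, hb, rfl⟩ := hφ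
  refine ⟨t * μ₀, t * μ₁, a, b, by gcongr, by positivity, ha, hb, ?_⟩
  funext p
  simp only [Pi.smul_apply, smul_eq_mul, Complex.ofReal_mul]
  ring

lemma schmidtRank2_of_orthogonal {x₀ x₁ y₀ y₁ : ZMod d → ℂ}
    (hx : star x₀ ⬝ᵥ x₁ = 0) (hx₀ : x₀ ≠ 0) (hx₁ : x₁ ≠ 0)
    (hy₀ : star y₀ ⬝ᵥ y₀ = 1) (hy₁ : star y₁ ⬝ᵥ y₁ = 1) (hy : star y₀ ⬝ᵥ y₁ = 0) :
    SchmidtRank2 fun p => x₀ p.1 * y₀ p.2 + x₁ p.1 * y₁ p.2 := by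
  wlog hle : ‖WithLp.toLp 2 x₁‖ ≤ ‖WithLp.toLp 2 x₀‖ generalizing x₀ x₁ y₀ y₁
  · have hx' : star x₁ ⬝ᵥ x₀ = 0 := by rw [star_dotProduct, hx, star_zero]
    have hy' : star y₁ ⬝ᵥ y₀ = 0 := by rw [star_dotProduct, hy, star_zero]
    simpa only [add_comm] using this hx' hx₁ hx₀ hy₁ hy₀ hy' (le_of_not_ge hle)
  set μ₀ := ‖WithLp.toLp 2 x₀‖ with hμ₀_def
  set μ₁ := ‖WithLp.toLp 2 x₁‖ with hμ₁_def
  have hμ₀ : (μ₀ : ℂ) ≠ 0 := Complex.ofReal_ne_zero.mpr (norm_toLp_pos hx₀).ne'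
  have hμ₁ : (μ₁ : ℂ) ≠ 0 := Complex.ofReal_ne_zero.mpr (norm_toLp_pos hx₁).ne'
  refine ⟨μ₀, μ₁, ![(μ₀ : ℂ)⁻¹ • x₀, (μ₁ : ℂ)⁻¹ • x₁], ![y₀, y₁], hle, norm_toLp_pos hx₁,
    ?_, ?_, ?_⟩
  · have hx' : star x₁ ⬝ᵥ x₀ = 0 := by rw [star_dotProduct, hx, star_zero]
    intro i j
    fin_cases i <;> fin_cases j <;>
      simp [star_smul, hx, hx', star_dotProduct_self_eq_norm_sq, ← hμ₀_def, ← hμ₁_def] <;>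
      field_simp
  · intro i j
    fin_cases i <;> fin_cases j <;> simp [hy₀, hy₁, hy, star_dotProduct y₁]
  · funext p
    simp [hμ₀, hμ₁]

lemma schmidtRank2_of_rank_eq_two {M : Matrix (ZMod d) (ZMod d) ℂ}
    (hM : M.rank = 2) : SchmidtRank2 fun p => M p.1 p.2 := by
  have hH : (Mᴴ * M).IsHermitian := isHermitian_conjTranspose_mul_self M
  set V : ZMod d → ZMod d → ℂ := fun i => ⇑(hH.eigenvectorBasis i)
  have hV : ∀ i j, star (V i) ⬝ᵥ V j = if i = j then 1 else 0 := by
    intro i j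
    rw [dotProduct_comm, ← EuclideanSpace.inner_eq_star_dotProduct]
    exact orthonormal_iff_ite.mp hH.eigenvectorBasis.orthonormal i j
  have hMV : ∀ i j,
      star (M *ᵥ V i) ⬝ᵥ (M *ᵥ V j) = if i = j then (hH.eigenvalues i : ℂ) else 0 := by
    intro i j
    rw [star_mulVec, ← dotProduct_mulVec, mulVec_mulVec, hH.mulVec_eigenvectorBasis,
      dotProduct_smul, hV]
    split_ifs with h
    · simp [h, Complex.real_smul]
    · simp
  have hexpand : ∀ a b, M a b = ∑ i, (M *ᵥ V i) a * star (V i b) := by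
    intro a b
    set U : Matrix (ZMod d) (ZMod d) ℂ := (hH.eigenvectorUnitary : Matrix (ZMod d) (ZMod d) ℂ)
    have hU : U * star U = 1 := mem_unitaryGroup_iff.mp hH.eigenvectorUnitary.2
    calc M a b = (M * U * star U) a b := by
          rw [mul_assoc, hU, mul_one]
      _ = _ := by simp [U, Matrix.mul_apply, Matrix.mulVec, dotProduct, V]
  have hker : ∀ i, hH.eigenvalues i = 0 → M *ᵥ V i = 0 := fun i hi =>
    dotProduct_star_self_eq_zero.mp (by simp [hMV, hi])
  have hne : ∀ i, hH.eigenvalues i ≠ 0 → M *ᵥ V i ≠ 0 := fun i hi h =>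
    hi (Complex.ofReal_eq_zero.mp (by simpa [h] using (hMV i i).symm))
  obtain ⟨j₀, j₁, hj, hsupp⟩ :
      ∃ j₀ j₁, j₀ ≠ j₁ ∧ ({i | hH.eigenvalues i ≠ 0} : Finset _) = {j₀, j₁} :=
    Finset.card_eq_two.mp (by
      rw [← Fintype.card_subtype (fun i => hH.eigenvalues i ≠ 0),
        ← hH.rank_eq_card_non_zero_eigs, rank_conjTranspose_mul_self, hM])
  have hsum : ∀ a b,
      M a b = (M *ᵥ V j₀) a * star (V j₀ b) + (M *ᵥ V j₁) a * star (V j₁ b) := by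
    intro a b
    rw [hexpand, ← Finset.sum_pair (f := fun i => (M *ᵥ V i) a * star (V i b)) hj]
    refine (Finset.sum_subset (Finset.subset_univ _) fun i _ hi => ?_).symm
    rw [← hsupp, Finset.mem_filter, not_and, not_not] at hi
    simp [hker i (hi (Finset.mem_univ i))]
  have hV' : ∀ i j, V i ⬝ᵥ star (V j) = if j = i then 1 else 0 := by
    intro i j
    rw [dotProduct_comm, hV]
  have hsupp' : ∀ i, i = j₀ ∨ i = j₁ → hH.eigenvalues i ≠ 0 := by
    intro i hi
    have : i ∈ ({j₀, j₁} : Finset _) := by simpa using hi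
    rw [← hsupp] at this
    simpa using this
  simpa only [hsum, Pi.star_apply] using
    schmidtRank2_of_orthogonal (x₀ := M *ᵥ V j₀) (x₁ := M *ᵥ V j₁)
    (y₀ := star (V j₀)) (y₁ := star (V j₁)) (by simp [hMV, hj])
    (hne j₀ (hsupp' j₀ (.inl rfl))) (hne j₁ (hsupp' j₁ (.inr rfl)))
    (by simp [hV']) (by simp [hV']) (by simp [hV', hj.symm])

end

lemma rank_eq_two_of_two_antidiagonals {M : Matrix (ZMod 3) (ZMod 3) ℂ}
    {u : ZMod 3 × ZMod 3 → ℂ} {s : ZMod 3}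
    (hM : ∀ i j, M i j =
      (if i + j = s then u (i, j) else 0) - (if i + j = s + 1 then u (i + 1, j + 1) else 0))
    {b : ZMod 3} (hb : u (b, s - b) ≠ 0) : M.rank = 2 := by
  refine le_antisymm (Nat.lt_succ_iff.mp ?_) ?_
  -- Row `i` has only the entries `u (i, s - i)` and `-u (i + 1, s + 2 - i)`, which this `w` cancels.
  · refine rank_lt_card_of_mulVec_eq_zero (w := fun c => u (s + 1 - c, c - 1)) ?_ ?_
    · intro h
      apply hb
      simpa [show s + 1 - (s + 1 - b) = b by ring, show s + 1 - b - 1 = s - b by ring]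
        using congrFun h (s + 1 - b)
    · funext i
      simp only [mulVec, dotProduct, hM, sub_mul, ite_mul, zero_mul, Finset.sum_sub_distrib,
        ← eq_sub_iff_add_eq']
      have h3 : (3 : ZMod 3) = 0 := rfl
      simp [show s + 1 - i + 1 = s - i - 1 by linear_combination h3]
      ring_nf
  · have hsub : M.submatrix ![b - 1, b] ![s + 2 - b, s - b] =
        !![-u (b, s - b), 0; 0, u (b, s - b)] := by
      have hidx : ∀ s b : ZMod 3, b - 1 + (s + 2 - b) = s + 1 ∧ b - 1 + (s - b) = s + 2 ∧
          b + (s + 2 - b) = s + 2 ∧ b + (s - b) = s ∧ b - 1 + 1 = b ∧ s + 2 - b + 1 = s - b ∧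
          s + 1 ≠ s ∧ s + 2 ≠ s ∧ s + 2 ≠ s + 1 := by
        decide
      obtain ⟨h₁, h₂, h₃, h₄, h₅, h₆, h₇, h₈, h₉⟩ := hidx s b
      ext i j
      fin_cases i <;> fin_cases j <;>
        simp [hM, h₁, h₂, h₃, h₄, h₅, h₆, h₇, h₈, h₉]
    have hunit : IsUnit !![-u (b, s - b), 0; 0, u (b, s - b)] := by
      rw [isUnit_iff_isUnit_det, det_fin_two_of, isUnit_iff_ne_zero]
      simpa using hb
    calc 2 = (M.submatrix ![b - 1, b] ![s + 2 - b, s - b]).rank := by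
          rw [hsub, rank_of_isUnit _ hunit, Fintype.card_fin]
      _ ≤ M.rank := rank_submatrix_le _ _ _

lemma exists_schmidtRank2_eigenvector_PT_bellDiagonal (c : ZMod 3 → ZMod 3 → ℂ) {μ : ℂ}
    {u : ZMod 3 × ZMod 3 → ℂ} (hu : u ≠ 0) (hμ : PT (bellDiagonal 3 c) *ᵥ u = μ • u) :
    ∃ φ, star φ ⬝ᵥ φ = 1 ∧ SchmidtRank2 φ ∧ PT (bellDiagonal 3 c) *ᵥ φ = μ • φ := by
  obtain ⟨p, hp⟩ := Function.ne_iff.mp hu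
  set w := {q : ZMod 3 × ZMod 3 | q.1 + q.2 = p.1 + p.2}.indicator u
  set ψ := w - w ∘ (· + (1, 1))
  have hw : PT (bellDiagonal 3 c) *ᵥ w = μ • w := by
    rw [mulVec_indicator_fiber (fun _ _ => PT_bellDiagonal_apply_eq_zero c), hμ]
    exact Set.indicator_const_smul _ μ u
  have hψ : PT (bellDiagonal 3 c) *ᵥ ψ = μ • ψ := by
    rw [mulVec_sub, mulVec_comp_add_right (PT_bellDiagonal_add_one_add_one c), hw, Pi.smul_comp,
      smul_sub]
  have hshift : ∀ i j s : ZMod 3, i + 1 + (j + 1) = s ↔ i + j = s + 1 := by decide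
  have hrank : (of fun i j => ψ (i, j)).rank = 2 :=
    rank_eq_two_of_two_antidiagonals (u := u) (s := p.1 + p.2)
      (fun i j => by simp [ψ, w, Set.indicator_apply, hshift]) (b := p.1) (by simpa using hp)
  have hψ0 : ψ ≠ 0 := by
    intro h
    have h0 : (of fun i j => ψ (i, j)) = 0 := by
      ext i j
      simp [h]
    simp [h0] at hrank
  obtain ⟨t, ht, hnorm⟩ := exists_real_smul_normalized hψ0
  exact ⟨(t : ℂ) • ψ, hnorm, (schmidtRank2_of_rank_eq_two hrank).real_smul ht,
    by rw [mulVec_smul, hψ, smul_comm]⟩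

theorem stmt0_general (ρ : Matrix (ZMod 3 × ZMod 3) (ZMod 3 × ZMod 3) ℂ)
    (c : ZMod 3 → ZMod 3 → ℝ)
    (hρ : ρ = ∑ k : ZMod 3, ∑ l : ZMod 3, (c k l : ℂ) • BellProj 3 k l)
    (hH : (PT ρ).IsHermitian)
    (hNPT : ¬ (PT ρ).PosSemidef) :
    (⨅ i, hH.eigenvalues i) < 0 ∧
    ∃ φ : ZMod 3 × ZMod 3 → ℂ,
      star φ ⬝ᵥ φ = 1 ∧ SchmidtRank2 φ ∧
      PT ρ *ᵥ φ = ((⨅ i, hH.eigenvalues i : ℝ) : ℂ) • φ ∧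
      star φ ⬝ᵥ (PT ρ *ᵥ φ) = ((⨅ i, hH.eigenvalues i : ℝ) : ℂ) := by
  obtain ⟨i₀, hi₀⟩ := exists_eq_ciInf_of_finite (f := hH.eigenvalues)
  have hneg : (⨅ i, hH.eigenvalues i) < 0 := by
    refine lt_of_not_ge fun h => hNPT (hH.posSemidef_iff_eigenvalues_nonneg.mpr fun i => ?_)
    exact h.trans (ciInf_le (Set.finite_range _).bddBelow i)
  have hu : ⇑(hH.eigenvectorBasis i₀) ≠ 0 := by
    simpa using hH.eigenvectorBasis.orthonormal.ne_zero i₀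
  have heig : PT ρ *ᵥ ⇑(hH.eigenvectorBasis i₀) =
      ((⨅ i, hH.eigenvalues i : ℝ) : ℂ) • ⇑(hH.eigenvectorBasis i₀) := by
    rw [hH.mulVec_eigenvectorBasis, ← hi₀, Complex.coe_smul]
  obtain rfl : ρ = bellDiagonal 3 fun k l => (c k l : ℂ) := hρ
  obtain ⟨φ, hnorm, hrank, hφ⟩ :=
    exists_schmidtRank2_eigenvector_PT_bellDiagonal (fun k l => (c k l : ℂ)) hu heig
  exact ⟨hneg, φ, hnorm, hrank, hφ, by rw [hφ, dotProduct_smul, hnorm, smul_eq_mul, mul_one]⟩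

/-- For every Bell-diagonal qutrit state `ρ ∈ M₃` whose partial transpose is not
positive semidefinite, the smallest eigenvalue `λ_min(ρ^Γ)` is negative and there is a
normalized Schmidt-rank-2 eigenvector of `ρ^Γ` for the eigenvalue `λ_min(ρ^Γ)`;
in particular `⟨φ|ρ^Γ|φ⟩ = λ_min(ρ^Γ) < 0`. -/
theorem stmt0 (ρ : Matrix (ZMod 3 × ZMod 3) (ZMod 3 × ZMod 3) ℂ)
    (c : ZMod 3 → ZMod 3 → ℝ) (hc : ∀ k l, 0 ≤ c k l)
    (hsum : ∑ k : ZMod 3, ∑ l : ZMod 3, c k l = 1)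
    (hρ : ρ = ∑ k : ZMod 3, ∑ l : ZMod 3, (c k l : ℂ) • BellProj 3 k l)
    (hH : (PT ρ).IsHermitian)
    (hNPT : ¬ (PT ρ).PosSemidef) :
    (⨅ i, hH.eigenvalues i) < 0 ∧
    ∃ φ : ZMod 3 × ZMod 3 → ℂ,
      star φ ⬝ᵥ φ = 1 ∧ SchmidtRank2 φ ∧
      PT ρ *ᵥ φ = ((⨅ i, hH.eigenvalues i : ℝ) : ℂ) • φ ∧
      star φ ⬝ᵥ (PT ρ *ᵥ φ) = ((⨅ i, hH.eigenvalues i : ℝ) : ℂ) :=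
  stmt0_general ρ c hρ hH hNPT
end

section
/- Let |φ⟩ = μ_0 |a_0⟩⊗|b_0⟩ + μ_1 |a_1⟩⊗|b_1⟩ be a normalized Schmidt rank 2 vector in ℂ^d ⊗ ℂ^d (μ_0 ≥ μ_1 > 0, μ_0² + μ_1² = 1, ⟨a_i|a_j⟩ = ⟨b_i|b_j⟩ = δ_{ij}) and W_φ = (|φ⟩⟨φ|)^Γ. Then the mirrored operator M_φ = μ_0² · 1_{d²} − W_φ is positive semidefinite. -/
/-!
With `fₛₜ = aₛ ⊗ b̄ₜ`, an orthonormal family, the partial transpose of `|φ⟩⟨φ|` is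
`W_φ = ∑ₛₜ μₛμₜ |fₛₜ⟩⟨fₜₛ|`. So for `gₛₜ = ⟨fₛₜ, x⟩` we get
`⟨x, W_φ x⟩ = ∑ₛₜ μₛμₜ ḡₛₜ gₜₛ ≤ μ₀² ∑ₛₜ |gₛₜ|² ≤ μ₀² ‖x‖²`,
by `2 |gₛₜ| |gₜₛ| ≤ |gₛₜ|² + |gₜₛ|²` and Bessel's inequality.
-/

open Matrix BigOperators Complex Kronecker
open scoped ComplexOrder

/-- The rank-one operator `|φ⟩⟨φ|`. -/
def outer {d : ℕ} (φ : ZMod d × ZMod d → ℂ) :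
    Matrix (ZMod d × ZMod d) (ZMod d × ZMod d) ℂ :=
  Matrix.of fun p q => φ p * (starRingEnd ℂ) (φ q)

/-- The product vector `u ⊗ v` in the standard basis of `ℂⁿ ⊗ ℂⁿ`. -/
def tensorVec {n : Type*} (u v : n → ℂ) : n × n → ℂ := fun p => u p.1 * v p.2

section Orthonormal

variable {n κ : Type*} [Fintype n] [DecidableEq κ]

theorem star_tensorVec_dotProduct_tensorVec (u v u' v' : n → ℂ) :
    star (tensorVec u v) ⬝ᵥ tensorVec u' v' = (star u ⬝ᵥ u') * (star v ⬝ᵥ v') := by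
  simp only [dotProduct, Finset.sum_mul_sum, ← Finset.univ_product_univ, Finset.sum_product,
    tensorVec, Pi.star_apply, star_mul']
  refine Finset.sum_congr rfl fun i _ => Finset.sum_congr rfl fun j _ => ?_
  ring

theorem orthonormal_tensorVec_star {a b : κ → n → ℂ}
    (ha : ∀ i j, star (a i) ⬝ᵥ a j = if i = j then 1 else 0)
    (hb : ∀ i j, star (b i) ⬝ᵥ b j = if i = j then 1 else 0) (p q : κ × κ) :
    star (tensorVec (a p.1) (star (b p.2))) ⬝ᵥ tensorVec (a q.1) (star (b q.2)) =
      if p = q then 1 else 0 := by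
  rw [star_tensorVec_dotProduct_tensorVec, star_dotProduct_star, dotProduct_comm (b q.2), hb,
    ha]
  by_cases h₁ : p.1 = q.1 <;> by_cases h₂ : p.2 = q.2 <;> simp [h₁, h₂, Prod.ext_iff]

/-- Bessel's inequality. -/
theorem sum_norm_sq_star_dotProduct_le [Fintype κ] {v : κ → n → ℂ}
    (hv : ∀ i j, star (v i) ⬝ᵥ v j = if i = j then 1 else 0) (x : n → ℂ) :
    ∑ i, ‖star (v i) ⬝ᵥ x‖ ^ 2 ≤ (star x ⬝ᵥ x).re := by
  have hon : Orthonormal ℂ fun i => WithLp.toLp 2 (v i) := by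
    refine orthonormal_iff_ite.mpr fun i j => ?_
    rw [EuclideanSpace.inner_toLp_toLp, dotProduct_comm, hv]
  have hbessel := hon.sum_inner_products_le (WithLp.toLp 2 x) (s := Finset.univ)
  rw [norm_sq_eq_re_inner (𝕜 := ℂ) (WithLp.toLp 2 x)] at hbessel
  simpa only [EuclideanSpace.inner_toLp_toLp, dotProduct_comm, RCLike.re_to_complex]
    using hbessel

end Orthonormal

theorem star_dotProduct_vecMulVec_mulVec {n : Type*} [Fintype n] (u v x : n → ℂ) :
    star x ⬝ᵥ (vecMulVec u (star v) *ᵥ x) = star (star u ⬝ᵥ x) * (star v ⬝ᵥ x) := by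
  rw [vecMulVec_mulVec, op_smul_eq_smul, dotProduct_smul, smul_eq_mul, star_dotProduct (v := x),
    mul_comm]

theorem isHermitian_PT_outer {d : ℕ} (φ : ZMod d × ZMod d → ℂ) :
    (PT (outer φ)).IsHermitian := by
  ext p q
  simp [PT, outer, mul_comm]

theorem PT_outer_sum_tensorVec {d : ℕ} {ι : Type*} [Fintype ι] (μ : ι → ℝ)
    (a b : ι → ZMod d → ℂ) :
    PT (outer (∑ s, (μ s : ℂ) • tensorVec (a s) (b s))) =
      ∑ s, ∑ t, ((μ s * μ t : ℝ) : ℂ) •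
        vecMulVec (tensorVec (a s) (star (b t))) (star (tensorVec (a t) (star (b s)))) := by
  ext p q
  simp only [PT, outer, of_apply, Finset.sum_apply, Pi.smul_apply, smul_eq_mul, map_sum,
    Finset.sum_mul_sum, Matrix.sum_apply, Matrix.smul_apply, vecMulVec_apply, tensorVec,
    Pi.star_apply, map_mul, conj_ofReal, star_mul', star_star, ofReal_mul]
  refine Finset.sum_congr rfl fun s _ => Finset.sum_congr rfl fun t _ => ?_
  simp only [RCLike.star_def]
  ring

theorem re_sum_swap_le {ι : Type*} [Fintype ι] {μ : ι → ℝ} {m : ℝ} (hμ : ∀ i, |μ i| ≤ m)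
    (g : ι → ι → ℂ) :
    (∑ s, ∑ t, ((μ s * μ t : ℝ) : ℂ) * (star (g s t) * g t s)).re ≤
      m ^ 2 * ∑ s, ∑ t, ‖g s t‖ ^ 2 := by
  have hterm : ∀ s t, (((μ s * μ t : ℝ) : ℂ) * (star (g s t) * g t s)).re ≤
      m ^ 2 / 2 * (‖g s t‖ ^ 2 + ‖g t s‖ ^ 2) := by
    intro s t
    have hμst : |μ s * μ t| ≤ m ^ 2 := by
      rw [abs_mul, sq]
      exact mul_le_mul (hμ s) (hμ t) (abs_nonneg _) ((abs_nonneg _).trans (hμ s))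
    calc (((μ s * μ t : ℝ) : ℂ) * (star (g s t) * g t s)).re
        ≤ |μ s * μ t| * ‖star (g s t) * g t s‖ := by
          rw [re_ofReal_mul]
          refine (le_abs_self _).trans ?_
          rw [abs_mul]
          gcongr
          exact abs_re_le_norm _
      _ ≤ m ^ 2 * (‖g s t‖ * ‖g t s‖) := by
          rw [norm_mul, norm_star]
          gcongr
      _ ≤ m ^ 2 / 2 * (‖g s t‖ ^ 2 + ‖g t s‖ ^ 2) := by
          nlinarith [sq_nonneg (‖g s t‖ - ‖g t s‖), sq_nonneg m]
  calc (∑ s, ∑ t, ((μ s * μ t : ℝ) : ℂ) * (star (g s t) * g t s)).re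
      = ∑ s, ∑ t, (((μ s * μ t : ℝ) : ℂ) * (star (g s t) * g t s)).re := by
        simp only [re_sum]
    _ ≤ ∑ s, ∑ t, m ^ 2 / 2 * (‖g s t‖ ^ 2 + ‖g t s‖ ^ 2) := by
        gcongr with s _ t _
        exact hterm s t
    _ = m ^ 2 * ∑ s, ∑ t, ‖g s t‖ ^ 2 := by
        simp only [mul_add, Finset.sum_add_distrib, ← Finset.mul_sum]
        rw [Finset.sum_comm (f := fun s t => ‖g t s‖ ^ 2)]
        ring

theorem posSemidef_smul_one_sub_PT_outer {d : ℕ} [NeZero d] {ι : Type*} [Fintype ι]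
    [DecidableEq ι] {μ : ι → ℝ} {m : ℝ} (hμ : ∀ i, |μ i| ≤ m) {a b : ι → ZMod d → ℂ}
    (ha : ∀ i j, star (a i) ⬝ᵥ a j = if i = j then 1 else 0)
    (hb : ∀ i j, star (b i) ⬝ᵥ b j = if i = j then 1 else 0) :
    (((m ^ 2 : ℝ) : ℂ) • (1 : Matrix (ZMod d × ZMod d) (ZMod d × ZMod d) ℂ) -
      PT (outer (∑ s, (μ s : ℂ) • tensorVec (a s) (b s)))).PosSemidef := by
  set W := PT (outer (∑ s, (μ s : ℂ) • tensorVec (a s) (b s)))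
  have hherm : (((m ^ 2 : ℝ) : ℂ) • (1 : Matrix _ _ ℂ) - W).IsHermitian :=
    (isHermitian_one.smul (conj_ofReal _)).sub (isHermitian_PT_outer _)
  refine .of_dotProduct_mulVec_nonneg hherm fun x => ?_
  set g : ι → ι → ℂ := fun s t => star (tensorVec (a s) (star (b t))) ⬝ᵥ x
  have hquad : star x ⬝ᵥ (W *ᵥ x) =
      ∑ s, ∑ t, ((μ s * μ t : ℝ) : ℂ) * (star (g s t) * g t s) := by
    simp only [W, PT_outer_sum_tensorVec, sum_mulVec, dotProduct_sum, smul_mulVec,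
      dotProduct_smul, star_dotProduct_vecMulVec_mulVec, smul_eq_mul, g]
  have hbessel := sum_norm_sq_star_dotProduct_le (orthonormal_tensorVec_star ha hb) x
  rw [Fintype.sum_prod_type] at hbessel
  have hswap := re_sum_swap_le hμ g
  refine nonneg_iff.mpr ⟨?_, (hherm.im_star_dotProduct_mulVec_self x).symm⟩
  rw [sub_mulVec, dotProduct_sub, smul_mulVec, one_mulVec, dotProduct_smul, smul_eq_mul, sub_re,
    re_ofReal_mul, hquad]
  nlinarith [sq_nonneg m]

theorem stmt8_general (d : ℕ) [NeZero d] (μ₀ μ₁ : ℝ)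
    (a b : Fin 2 → ZMod d → ℂ)
    (hμ : μ₁ ≤ μ₀) (hμ1 : 0 < μ₁)
    (ha : ∀ i j, star (a i) ⬝ᵥ a j = if i = j then 1 else 0)
    (hb : ∀ i j, star (b i) ⬝ᵥ b j = if i = j then 1 else 0)
    (φ : ZMod d × ZMod d → ℂ)
    (hφ : φ = fun p => (μ₀ : ℂ) * a 0 p.1 * b 0 p.2 + (μ₁ : ℂ) * a 1 p.1 * b 1 p.2) :
    (((μ₀ ^ 2 : ℝ) : ℂ) • (1 : Matrix (ZMod d × ZMod d) (ZMod d × ZMod d) ℂ) -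
      PT (outer φ)).PosSemidef := by
  have hφ_sum : φ = ∑ s, ((![μ₀, μ₁] s : ℝ) : ℂ) • tensorVec (a s) (b s) := by
    ext p
    simp [hφ, Fin.sum_univ_two, tensorVec, mul_assoc]
  have hμ_le : ∀ i, |![μ₀, μ₁] i| ≤ μ₀ := by
    intro i
    fin_cases i <;> simp [abs_of_pos hμ1, abs_of_pos (hμ1.trans_le hμ), hμ]
  rw [hφ_sum]
  exact posSemidef_smul_one_sub_PT_outer hμ_le ha hb

/-- The mirrored operator `M_φ = μ₀² 1 - W_φ` of the 1-distillability witness of a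
normalized Schmidt-rank-2 vector is positive semidefinite. -/
theorem stmt8 (d : ℕ) [NeZero d] (μ₀ μ₁ : ℝ)
    (a b : Fin 2 → ZMod d → ℂ)
    (hμ : μ₁ ≤ μ₀) (hμ1 : 0 < μ₁) (hnorm : μ₀ ^ 2 + μ₁ ^ 2 = 1)
    (ha : ∀ i j, star (a i) ⬝ᵥ a j = if i = j then 1 else 0)
    (hb : ∀ i j, star (b i) ⬝ᵥ b j = if i = j then 1 else 0)
    (φ : ZMod d × ZMod d → ℂ)
    (hφ : φ = fun p => (μ₀ : ℂ) * a 0 p.1 * b 0 p.2 + (μ₁ : ℂ) * a 1 p.1 * b 1 p.2) :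
    (((μ₀ ^ 2 : ℝ) : ℂ) • (1 : Matrix (ZMod d × ZMod d) (ZMod d × ZMod d) ℂ) -
      PT (outer φ)).PosSemidef :=
  stmt8_general d μ₀ μ₁ a b hμ hμ1 ha hb φ hφ
end

section
/- Let U = Σ_{r,s=0}^{d−1} |r,s⟩⟨Ω_{r,s}| be the Bell unitary, F = (1/√d) Σ_{x,y=0}^{d−1} ω^{−xy} |x⟩⟨y| the discrete Fourier matrix, and 𝔽 = Σ_{r,s=0}^{d−1} |r,s⟩⟨s,r| the flip (swap) operator on ℂ^d ⊗ ℂ^d. Then U^† 𝔽 U = (F^† ⊗ F) 𝔽. In particular, since (F^† ⊗ F) is a local unitary and 𝔽 maps product vectors to product vectors, conjugation of a vector by U^† 𝔽 U preserves its Schmidt rank. -/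
open Matrix BigOperators Complex Kronecker
open scoped ComplexOrder

/-- Bell unitary `U = Σ_{r,s} |r,s⟩⟨Ω_{r,s}|`. -/
noncomputable def BellU (d : ℕ) [NeZero d] :
    Matrix (ZMod d × ZMod d) (ZMod d × ZMod d) ℂ :=
  Matrix.of fun p q => (starRingEnd ℂ) (OmegaVec d p.1 p.2 q)

/-- Discrete Fourier matrix `F = (1/√d) Σ_{x,y} ω^{-xy} |x⟩⟨y|`. -/
noncomputable def Fmat (d : ℕ) [NeZero d] : Matrix (ZMod d) (ZMod d) ℂ :=
  Matrix.of fun x y => ((1 / Real.sqrt d : ℝ) : ℂ) * wpow d (-(x * y))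

/-- The flip (swap) operator `𝔽 = Σ_{r,s} |r,s⟩⟨s,r|`. -/
def FlipOp (d : ℕ) : Matrix (ZMod d × ZMod d) (ZMod d × ZMod d) ℂ :=
  Matrix.of fun p q => if p.1 = q.2 ∧ p.2 = q.1 then 1 else 0

/-!
Writing `ω^x` as the standard additive character of `ZMod d`, both sides have `(p, q)` entry
`ω^(p₁ q₂ - p₂ q₁) / d`: in `U^† 𝔽 U` only one Bell index contributes, because `Ω_{k,l}(i, j)`
vanishes unless `j - i = l`. Reading a vector `φ` as its coefficient matrix `Φ`, the operator
`(A ⊗ B) 𝔽` acts as `Φ ↦ A Φᵀ Bᵀ`; `F` is unitary by orthogonality of characters, so the rank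
of `Φ` is preserved.
-/

namespace Matrix

variable {R l m n p : Type*} [CommSemiring R] [Fintype m] [Fintype p]

lemma of_kronecker_mulVec (A : Matrix l m R) (B : Matrix n p R) (φ : m × p → R) :
    (of fun i j => ((A ⊗ₖ B) *ᵥ φ) (i, j)) = A * (of fun i j => φ (i, j)) * Bᵀ := by
  ext i j
  simp only [of_apply, mulVec, dotProduct, kroneckerMap_apply, Fintype.sum_prod_type, mul_apply,
    transpose_apply, Finset.sum_mul]
  rw [Finset.sum_comm]
  exact Finset.sum_congr rfl fun _ _ => Finset.sum_congr rfl fun _ _ => by ring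

end Matrix

open ZMod

section

variable (d : ℕ)

lemma ofReal_one_div_sqrt_mul_self :
    ((1 / Real.sqrt d : ℝ) : ℂ) * ((1 / Real.sqrt d : ℝ) : ℂ) = (d : ℂ)⁻¹ := by
  rw [← Complex.ofReal_mul, div_mul_div_comm, one_mul, Real.mul_self_sqrt (Nat.cast_nonneg d)]
  simp

lemma flipOp_apply (p q : ZMod d × ZMod d) : FlipOp d p q = if p = q.swap then 1 else 0 := by
  simp [FlipOp, Prod.ext_iff]

variable [NeZero d]

lemma mul_flipOp_apply (M : Matrix (ZMod d × ZMod d) (ZMod d × ZMod d) ℂ) (p q : ZMod d × ZMod d) :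
    (M * FlipOp d) p q = M p q.swap := by
  simp [mul_apply, flipOp_apply]

lemma flipOp_mulVec (φ : ZMod d × ZMod d → ℂ) : FlipOp d *ᵥ φ = φ ∘ Prod.swap := by
  ext p
  simp [mulVec, dotProduct, flipOp_apply, ← Prod.swap_eq_iff_eq_swap]

lemma wpow_eq_stdAddChar (x : ZMod d) : wpow d x = stdAddChar x := by
  rw [wpow, omg, ← Complex.exp_nat_mul, stdAddChar_apply, toCircle_apply]
  ring_nf

lemma omegaVec_apply (k l i j : ZMod d) :
    OmegaVec d k l (i, j) =
      if l = j - i then ((1 / Real.sqrt d : ℝ) : ℂ) * stdAddChar (i * k) else 0 := by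
  simp [OmegaVec, Weyl, wpow_eq_stdAddChar, eq_sub_iff_add_eq', eq_comm]

lemma Fmat_apply (x y : ZMod d) :
    Fmat d x y = ((1 / Real.sqrt d : ℝ) : ℂ) * stdAddChar (-(x * y)) := by
  rw [Fmat, of_apply, wpow_eq_stdAddChar]

lemma Fmat_conjTranspose_mul_self : (Fmat d)ᴴ * Fmat d = 1 := by
  ext a b
  simp only [mul_apply, conjTranspose_apply, Fmat_apply, star_mul', Complex.star_def,
    Complex.conj_ofReal, ← AddChar.map_neg_eq_conj, neg_neg, mul_mul_mul_comm _ (stdAddChar _),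
    ofReal_one_div_sqrt_mul_self, ← AddChar.map_add_eq_mul, ← Finset.mul_sum,
    ← sub_eq_add_neg, ← mul_sub]
  rw [AddChar.sum_mulShift _ (isPrimitive_stdAddChar d)]
  simp [one_apply, sub_eq_zero, apply_ite, NeZero.ne d]

lemma conjTranspose_bellU_mul_flipOp_mul_bellU_apply (p q : ZMod d × ZMod d) :
    ((BellU d)ᴴ * FlipOp d * BellU d) p q = (d : ℂ)⁻¹ * stdAddChar (p.1 * q.2 - p.2 * q.1) := by
  obtain ⟨i, j⟩ := p
  obtain ⟨k, l⟩ := q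
  rw [mul_apply]
  simp only [mul_flipOp_apply, conjTranspose_apply, BellU, of_apply, Complex.star_def,
    Complex.conj_conj, Fintype.sum_prod_type, Prod.swap, omegaVec_apply, apply_ite (starRingEnd ℂ),
    map_zero, ite_mul, zero_mul, mul_ite, mul_zero]
  simp only [Finset.sum_ite_eq', Finset.mem_univ, if_true, map_mul, Complex.conj_ofReal,
    ← AddChar.map_neg_eq_conj, mul_mul_mul_comm _ (stdAddChar _), ofReal_one_div_sqrt_mul_self,
    ← AddChar.map_add_eq_mul]
  ring_nf

lemma fourier_kronecker_mul_flipOp_apply (p q : ZMod d × ZMod d) :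
    (((Fmat d)ᴴ ⊗ₖ Fmat d) * FlipOp d) p q = (d : ℂ)⁻¹ * stdAddChar (p.1 * q.2 - p.2 * q.1) := by
  simp only [mul_flipOp_apply, kroneckerMap_apply, conjTranspose_apply, Fmat_apply, star_mul',
    Complex.star_def, Complex.conj_ofReal, ← AddChar.map_neg_eq_conj, neg_neg, mul_mul_mul_comm _ (stdAddChar _),
    ofReal_one_div_sqrt_mul_self, ← AddChar.map_add_eq_mul, Prod.fst_swap, Prod.snd_swap]
  ring_nf

lemma conjTranspose_bellU_mul_flipOp_mul_bellU :
    (BellU d)ᴴ * FlipOp d * BellU d = ((Fmat d)ᴴ ⊗ₖ Fmat d) * FlipOp d := by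
  ext p q
  rw [conjTranspose_bellU_mul_flipOp_mul_bellU_apply, fourier_kronecker_mul_flipOp_apply]

lemma rank_of_fourier_kronecker_mul_flipOp_mulVec (φ : ZMod d × ZMod d → ℂ) :
    (of fun i j : ZMod d => ((((Fmat d)ᴴ ⊗ₖ Fmat d) * FlipOp d) *ᵥ φ) (i, j)).rank =
      (of fun i j : ZMod d => φ (i, j)).rank := by
  have hF := Fmat_conjTranspose_mul_self d
  rw [← mulVec_mulVec, of_kronecker_mulVec, flipOp_mulVec,
    rank_mul_eq_left_of_isUnit_det _ _ (by rw [det_transpose]; exact isUnit_det_of_left_inverse hF),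
    rank_mul_eq_right_of_isUnit_det _ _ (isUnit_det_of_right_inverse hF)]
  exact rank_transpose _

end

theorem stmt15_general (d : ℕ) [NeZero d] :
    (BellU d)ᴴ * FlipOp d * BellU d = ((Fmat d)ᴴ ⊗ₖ Fmat d) * FlipOp d ∧
    ∀ φ : ZMod d × ZMod d → ℂ,
      (Matrix.of fun i j : ZMod d =>
        (((BellU d)ᴴ * FlipOp d * BellU d) *ᵥ φ) (i, j)).rank =
      (Matrix.of fun i j : ZMod d => φ (i, j)).rank := by
  rw [conjTranspose_bellU_mul_flipOp_mul_bellU]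
  exact ⟨rfl, rank_of_fourier_kronecker_mul_flipOp_mulVec d⟩

/-- `U^† 𝔽 U = (F^† ⊗ F) 𝔽`; in particular, applying `U^† 𝔽 U` to a vector preserves the
rank of its coefficient matrix (its Schmidt rank). -/
theorem stmt15 (d : ℕ) [NeZero d] (hd : 2 ≤ d) :
    (BellU d)ᴴ * FlipOp d * BellU d = ((Fmat d)ᴴ ⊗ₖ Fmat d) * FlipOp d ∧
    ∀ φ : ZMod d × ZMod d → ℂ,
      (Matrix.of fun i j : ZMod d =>
        (((BellU d)ᴴ * FlipOp d * BellU d) *ᵥ φ) (i, j)).rank =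
      (Matrix.of fun i j : ZMod d => φ (i, j)).rank :=
  stmt15_general d
end
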